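/- Let (p_{ki}) be nonnegative reals with p_{ki} < 1 for k ≠ i, and suppose positive reals φ_i, ℓ_i satisfy ℓ_i ≤ α_{ii} ≤ φ_i, where α_{ij} are the entries of A^{-1} for a strictly diagonally dominant M-matrix A with α_{ki} ≤ p_{ki} α_{ii}. Then τ(A) ≥ 2 / max_{i≠j}{ φ_i + φ_j + [ (max{φ_i,φ_j} - min{ℓ_i,ℓ_j})² + 4 φ_i φ_j (Σ_{k≠i} p_{ki})(Σ_{k≠j} p_{kj}) ]^{1/2} }. -/

import Mathlib

/-!
Every eigenvalue `μ` of the nonnegative matrix `B = A⁻¹` lies in one of Brauer's ovals of Cassini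
for the columns of `B`: `|μ - α_ii| |μ - α_jj| ≤ R_i R_j` for some `i ≠ j`, where
`R_i = ∑_{k ≠ i} α_ki ≤ φ_i ∑_{k ≠ i} p_ki`. Such an oval lies in the disc whose radius is the
larger root of `(x - α_ii)(x - α_jj) = R_i R_j`, namely
`(α_ii + α_jj + √((α_ii - α_jj)² + 4 R_i R_j)) / 2`; this radius only grows when `α_ii, α_jj` are
replaced by `φ_i, φ_j` and `|α_ii - α_jj|` by `max{φ_i, φ_j} - min{ℓ_i, ℓ_j}`.
-/

open Finset

/-- The spectral radius of a real matrix. -/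
noncomputable def specRad {n : ℕ} (M : Matrix (Fin n) (Fin n) ℝ) : ℝ :=
  sSup ((fun z : ℂ => ‖z‖) '' spectrum ℂ (M.map Complex.ofReal))

namespace Matrix

variable {K ι : Type*} [Fintype ι] [DecidableEq ι]

theorem spectrum_transpose [Field K] (A : Matrix ι ι K) : spectrum K Aᵀ = spectrum K A := by
  ext μ
  simp only [mem_spectrum_iff_isRoot_charpoly, charpoly_transpose]

variable [NormedField K]

lemma norm_sub_diag_mul_le_of_mulVec_eq_smul {A : Matrix ι ι K} {μ : K} {v : ι → K}
    (hv : A *ᵥ v = μ • v) (k : ι) {c : ℝ} (hc : ∀ l ∈ univ.erase k, ‖v l‖ ≤ c) :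
    ‖μ - A k k‖ * ‖v k‖ ≤ (∑ l ∈ univ.erase k, ‖A k l‖) * c := by
  have hrow : (μ - A k k) * v k = ∑ l ∈ univ.erase k, A k l * v l := by
    have := congrFun hv k
    rw [mulVec, dotProduct, ← add_sum_erase _ _ (mem_univ k), Pi.smul_apply, smul_eq_mul] at this
    linear_combination -this
  calc ‖μ - A k k‖ * ‖v k‖ = ‖∑ l ∈ univ.erase k, A k l * v l‖ := by rw [← norm_mul, hrow]
    _ ≤ ∑ l ∈ univ.erase k, ‖A k l‖ * c := by
      refine (norm_sum_le _ _).trans (sum_le_sum fun l hl => ?_)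
      rw [norm_mul]
      exact mul_le_mul_of_nonneg_left (hc l hl) (norm_nonneg _)
    _ = (∑ l ∈ univ.erase k, ‖A k l‖) * c := (sum_mul ..).symm

/-- **Brauer's ovals of Cassini theorem**: the two largest coordinates of an eigenvector pick
the pair `i ≠ j`. -/
theorem exists_cassini_of_mulVec_eq_smul [Nontrivial ι] {A : Matrix ι ι K} {μ : K} {v : ι → K}
    (hv : A *ᵥ v = μ • v) (hv0 : v ≠ 0) :
    ∃ i j, i ≠ j ∧ ‖μ - A i i‖ * ‖μ - A j j‖ ≤
      (∑ k ∈ univ.erase i, ‖A i k‖) * (∑ k ∈ univ.erase j, ‖A j k‖) := by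
  obtain ⟨i, -, hi⟩ := exists_max_image univ (fun k => ‖v k‖) univ_nonempty
  obtain ⟨j, hj, hj_max⟩ := exists_max_image (univ.erase i) (fun k => ‖v k‖)
    (univ_nontrivial.erase_nonempty)
  have hji : j ≠ i := ne_of_mem_erase hj
  have hi_bound := norm_sub_diag_mul_le_of_mulVec_eq_smul hv i hj_max
  have hj_bound := norm_sub_diag_mul_le_of_mulVec_eq_smul hv j fun l _ => hi l (mem_univ l)
  refine ⟨i, j, hji.symm, ?_⟩
  have hvi : 0 < ‖v i‖ := by
    obtain ⟨k, hk⟩ := Function.ne_iff.mp hv0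
    exact (norm_pos_iff.mpr hk).trans_le (hi k (mem_univ k))
  rcases (norm_nonneg (v j)).eq_or_lt with hvj | hvj
  · have : ‖μ - A i i‖ = 0 := by
      rw [← hvj, mul_zero] at hi_bound
      exact le_antisymm (nonpos_of_mul_nonpos_left hi_bound hvi) (norm_nonneg _)
    rw [this, zero_mul]
    positivity
  · refine le_of_mul_le_mul_right ?_ (mul_pos hvi hvj)
    calc ‖μ - A i i‖ * ‖μ - A j j‖ * (‖v i‖ * ‖v j‖)
        = (‖μ - A i i‖ * ‖v i‖) * (‖μ - A j j‖ * ‖v j‖) := by ring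
      _ ≤ ((∑ k ∈ univ.erase i, ‖A i k‖) * ‖v j‖) * ((∑ k ∈ univ.erase j, ‖A j k‖) * ‖v i‖) :=
        mul_le_mul hi_bound hj_bound (by positivity) (by positivity)
      _ = _ := by ring

theorem exists_cassini_of_mem_spectrum [Nontrivial ι] {A : Matrix ι ι K} {μ : K}
    (hμ : μ ∈ spectrum K A) :
    ∃ i j, i ≠ j ∧ ‖μ - A i i‖ * ‖μ - A j j‖ ≤
      (∑ k ∈ univ.erase i, ‖A i k‖) * (∑ k ∈ univ.erase j, ‖A j k‖) := by
  rw [← spectrum_toLin', ← Module.End.hasEigenvalue_iff_mem_spectrum] at hμ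
  obtain ⟨v, hv, hv0⟩ := hμ.exists_hasEigenvector
  exact exists_cassini_of_mulVec_eq_smul (Module.End.mem_eigenspace_iff.mp hv) hv0

theorem exists_cassini_col_of_mem_spectrum [Nontrivial ι] {A : Matrix ι ι K} {μ : K}
    (hμ : μ ∈ spectrum K A) :
    ∃ i j, i ≠ j ∧ ‖μ - A i i‖ * ‖μ - A j j‖ ≤
      (∑ k ∈ univ.erase i, ‖A k i‖) * (∑ k ∈ univ.erase j, ‖A k j‖) :=
  exists_cassini_of_mem_spectrum (A := Aᵀ) (by rwa [spectrum_transpose])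

end Matrix

/-- The bound is the larger root of `(x - ‖a‖) * (x - ‖b‖) = r`. -/
theorem norm_le_of_norm_sub_mul_norm_sub_le {E : Type*} [SeminormedAddCommGroup E] {z a b : E}
    {r : ℝ} (h : ‖z - a‖ * ‖z - b‖ ≤ r) :
    ‖z‖ ≤ (‖a‖ + ‖b‖ + √((‖a‖ - ‖b‖) ^ 2 + 4 * r)) / 2 := by
  have ha : ‖z‖ - ‖a‖ ≤ ‖z - a‖ := norm_sub_norm_le z a
  have hb : ‖z‖ - ‖b‖ ≤ ‖z - b‖ := norm_sub_norm_le z b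
  have hr : 0 ≤ r := (by positivity : 0 ≤ ‖z - a‖ * ‖z - b‖).trans h
  suffices 2 * ‖z‖ - ‖a‖ - ‖b‖ ≤ √((‖a‖ - ‖b‖) ^ 2 + 4 * r) by linarith
  rcases le_or_gt (2 * ‖z‖ - ‖a‖ - ‖b‖) 0 with h0 | h0
  · exact h0.trans (Real.sqrt_nonneg _)
  refine Real.le_sqrt_of_sq_le ?_
  suffices (‖z‖ - ‖a‖) * (‖z‖ - ‖b‖) ≤ r by linarith
  rcases le_or_gt 0 (‖z‖ - ‖a‖) with hza | hza
  · rcases le_or_gt 0 (‖z‖ - ‖b‖) with hzb | hzb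
    · exact (mul_le_mul ha hb hzb (norm_nonneg _)).trans h
    · nlinarith
  · nlinarith

section specRad

variable {n : ℕ} [NeZero n] {M : Matrix (Fin n) (Fin n) ℝ}

theorem specRad_le_of_forall_norm_le {c : ℝ}
    (h : ∀ μ ∈ spectrum ℂ (M.map Complex.ofReal), ‖μ‖ ≤ c) : specRad M ≤ c :=
  csSup_le ((spectrum.nonempty_of_isAlgClosed_of_finiteDimensional ℂ _).image _)
    (Set.forall_mem_image.mpr h)

theorem specRad_pos (hM : IsUnit M.det) : 0 < specRad M := by
  obtain ⟨μ, hμ⟩ := spectrum.nonempty_of_isAlgClosed_of_finiteDimensional ℂ (M.map Complex.ofReal)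
  have hμ0 : μ ≠ 0 := by
    rintro rfl
    refine (spectrum.zero_mem_iff ℂ).mp hμ ((Matrix.isUnit_iff_isUnit_det _).mpr ?_)
    exact RingHom.map_det Complex.ofRealHom M ▸ hM.map Complex.ofRealHom
  calc 0 < ‖μ‖ := norm_pos_iff.mpr hμ0
    _ ≤ specRad M :=
      le_csSup ((Matrix.finite_spectrum _).image _).bddAbove (Set.mem_image_of_mem _ hμ)

end specRad

theorem exists_two_mul_norm_le_of_mem_spectrum {ι : Type*} [Fintype ι] [DecidableEq ι]
    [Nontrivial ι] {B : Matrix ι ι ℝ} (hB : ∀ i j, 0 ≤ B i j) {p : ι → ι → ℝ}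
    (hp0 : ∀ k i, k ≠ i → 0 ≤ p k i) (hpB : ∀ k i, k ≠ i → B k i ≤ p k i * B i i)
    {φ ℓ : ι → ℝ} (hlow : ∀ i, ℓ i ≤ B i i) (hup : ∀ i, B i i ≤ φ i)
    {μ : ℂ} (hμ : μ ∈ spectrum ℂ (B.map Complex.ofReal)) :
    ∃ i j, i ≠ j ∧ 2 * ‖μ‖ ≤ φ i + φ j + √((max (φ i) (φ j) - min (ℓ i) (ℓ j)) ^ 2 +
      4 * φ i * φ j * (∑ k ∈ univ.erase i, p k i) * (∑ k ∈ univ.erase j, p k j)) := by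
  have hcol : ∀ i, ∑ k ∈ univ.erase i, B k i ≤ (∑ k ∈ univ.erase i, p k i) * φ i := fun i => by
    rw [sum_mul]
    refine sum_le_sum fun k hk => ?_
    have hki := ne_of_mem_erase hk
    exact (hpB k i hki).trans (mul_le_mul_of_nonneg_left (hup i) (hp0 k i hki))
  have hcol0 : ∀ i, 0 ≤ ∑ k ∈ univ.erase i, B k i := fun i => sum_nonneg fun k _ => hB k i
  have hnorm : ∀ k i, ‖(B k i : ℂ)‖ = B k i := fun k i => by
    rw [Complex.norm_real, Real.norm_of_nonneg (hB k i)]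
  obtain ⟨i, j, hij, hμij⟩ := Matrix.exists_cassini_col_of_mem_spectrum hμ
  simp only [Matrix.map_apply, hnorm] at hμij
  have hbound := norm_le_of_norm_sub_mul_norm_sub_le <| hμij.trans <|
    mul_le_mul (hcol i) (hcol j) (hcol0 j) ((hcol0 i).trans (hcol i))
  rw [hnorm, hnorm] at hbound
  have hdiag : |B i i - B j j| ≤ max (φ i) (φ j) - min (ℓ i) (ℓ j) :=
    abs_sub_le_of_le_of_le ((min_le_left _ _).trans (hlow i)) ((hup i).trans (le_max_left _ _))
      ((min_le_right _ _).trans (hlow j)) ((hup j).trans (le_max_right _ _))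
  refine ⟨i, j, hij, ?_⟩
  calc 2 * ‖μ‖ ≤ B i i + B j j + √((B i i - B j j) ^ 2 +
        4 * (((∑ k ∈ univ.erase i, p k i) * φ i) * ((∑ k ∈ univ.erase j, p k j) * φ j))) := by
        linarith
    _ ≤ φ i + φ j + √((max (φ i) (φ j) - min (ℓ i) (ℓ j)) ^ 2 +
        4 * (((∑ k ∈ univ.erase i, p k i) * φ i) * ((∑ k ∈ univ.erase j, p k j) * φ j))) := by
      gcongr ?_ + ?_ + √(?_ + _)
      · exact hup i
      · exact hup j
      · exact sq_le_sq' (abs_le.mp hdiag).1 (abs_le.mp hdiag).2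
    _ = _ := by ring_nf

theorem div_le_one_div_specRad {n : ℕ} [NeZero n] {M : Matrix (Fin n) (Fin n) ℝ}
    (hM : IsUnit M.det) {c D : ℝ} (hc : 0 < c)
    (h : ∀ μ ∈ spectrum ℂ (M.map Complex.ofReal), c * ‖μ‖ ≤ D) : c / D ≤ 1 / specRad M := by
  have hρ_pos := specRad_pos hM
  have hρ : c * specRad M ≤ D := by
    rw [← le_div_iff₀' hc]
    exact specRad_le_of_forall_norm_le fun μ hμ => (le_div_iff₀' hc).mpr (h μ hμ)
  rw [div_le_div_iff₀ ((mul_pos hc hρ_pos).trans_le hρ) hρ_pos]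
  linarith

theorem tau_lower_bound_entrywise_general {n : ℕ}
    (A : Matrix (Fin n) (Fin n) ℝ)
    (hA : IsUnit A.det)
    (hinv : ∀ i j, 0 ≤ A⁻¹ i j)
    (p : Fin n → Fin n → ℝ)
    (hp0 : ∀ k i, k ≠ i → 0 ≤ p k i)
    (hpa : ∀ k i, k ≠ i → A⁻¹ k i ≤ p k i * A⁻¹ i i)
    (φ ℓ : Fin n → ℝ)
    (hlow : ∀ i, ℓ i ≤ A⁻¹ i i) (hup : ∀ i, A⁻¹ i i ≤ φ i)
    (hne : (univ.offDiag : Finset (Fin n × Fin n)).Nonempty) :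
    2 / (univ.offDiag.sup' hne (fun q =>
        φ q.1 + φ q.2 + Real.sqrt ((max (φ q.1) (φ q.2) - min (ℓ q.1) (ℓ q.2)) ^ 2 +
          4 * φ q.1 * φ q.2 * (∑ k ∈ univ.erase q.1, p k q.1) *
            (∑ k ∈ univ.erase q.2, p k q.2)))) ≤
      1 / specRad A⁻¹ := by
  obtain ⟨⟨i₀, j₀⟩, hij₀⟩ := id hne
  have : Nontrivial (Fin n) := ⟨⟨i₀, j₀, (mem_offDiag.mp hij₀).2.2⟩⟩
  have : NeZero n := ⟨i₀.pos.ne'⟩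
  refine div_le_one_div_specRad (A.isUnit_nonsing_inv_det hA) two_pos fun μ hμ => ?_
  obtain ⟨i, j, hij, hμij⟩ := exists_two_mul_norm_le_of_mem_spectrum hinv hp0 hpa hlow hup hμ
  exact le_sup'_of_le _ (b := (i, j)) (mem_offDiag.mpr ⟨mem_univ i, mem_univ j, hij⟩) hμij

/-- Lower bound for `τ(A) = 1/ρ(A⁻¹)` of a strictly diagonally dominant `M`-matrix using
lower and upper bounds `ℓ_i ≤ α_ii ≤ φ_i` on the diagonal entries of `A⁻¹`. -/
theorem tau_lower_bound_entrywise {n : ℕ} (hn : 2 ≤ n)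
    (A : Matrix (Fin n) (Fin n) ℝ)
    (hA : IsUnit A.det)
    (hoff : ∀ i j, i ≠ j → A i j ≤ 0)
    (hinv : ∀ i j, 0 ≤ A⁻¹ i j)
    (hsdd : ∀ i, ∑ j ∈ univ.erase i, |A i j| < A i i)
    (p : Fin n → Fin n → ℝ)
    (hp0 : ∀ k i, k ≠ i → 0 ≤ p k i) (hp1 : ∀ k i, k ≠ i → p k i < 1)
    (hpa : ∀ k i, k ≠ i → A⁻¹ k i ≤ p k i * A⁻¹ i i)
    (φ ℓ : Fin n → ℝ) (hφ : ∀ i, 0 < φ i) (hℓ : ∀ i, 0 < ℓ i)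
    (hlow : ∀ i, ℓ i ≤ A⁻¹ i i) (hup : ∀ i, A⁻¹ i i ≤ φ i)
    (hne : (univ.offDiag : Finset (Fin n × Fin n)).Nonempty) :
    2 / (univ.offDiag.sup' hne (fun q =>
        φ q.1 + φ q.2 + Real.sqrt ((max (φ q.1) (φ q.2) - min (ℓ q.1) (ℓ q.2)) ^ 2 +
          4 * φ q.1 * φ q.2 * (∑ k ∈ univ.erase q.1, p k q.1) *
            (∑ k ∈ univ.erase q.2, p k q.2)))) ≤
      1 / specRad A⁻¹ :=
  tau_lower_bound_entrywise_general A hA hinv p hp0 hpa φ ℓ hlow hup hne
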